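/- With the modified lower-terminal definition, let f : [a,∞) → ℝ, t₀ ∈ [a,∞), α ∈ (0,1), and suppose T_a^α f(t₀) exists. Then T_a^β f(t₀) exists for every β ∈ (0,1], and T_a^α f(t₀) = (t₀−a)^{β−α} T_a^β f(t₀) when t₀ > a, while T_a^β f(t₀) = (t₀−a)^{α−β} T_a^α f(t₀) when t₀ = a and β < α. -/

import Mathlib

open Filter Topology Set

/-- The conformable (left-sided) derivative of order `α` with lower terminal `a`:
`f` has conformable derivative `L` at `t` if the difference quotient
`(f (t + θ*(t-a)^(1-α)) - f t)/θ` tends to `L` as `θ → 0`. -/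
def HasConfDerivAt (a α : ℝ) (f : ℝ → ℝ) (t L : ℝ) : Prop :=
  Tendsto (fun θ : ℝ => (f (t + θ * (t - a) ^ (1 - α)) - f t) / θ) (𝓝[≠] (0:ℝ)) (𝓝 L)

/-- The conformable integral of order `α` with lower terminal `a`. -/
noncomputable def confInt (a α : ℝ) (f : ℝ → ℝ) (t : ℝ) : ℝ :=
  ∫ s in a..t, (s - a) ^ (α - 1) * f s

/-- Modified conformable derivative: at the lower terminal `a` it exists iff the
right derivative of `f` at `a` exists, with value `f'(a+)` when `α = 1` and `0`
when `α ∈ (0,1)`; away from `a` it is the usual conformable derivative. -/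
def MHasConfDerivAt (a α : ℝ) (f : ℝ → ℝ) (t L : ℝ) : Prop :=
  if t = a then
    ∃ d : ℝ, HasDerivWithinAt f d (Set.Ici a) a ∧ L = (if α = 1 then d else 0)
  else HasConfDerivAt a α f t L

/-! Away from the terminal, substituting `θ ↦ θ * (t - a) ^ (1 - α)` in the difference quotient
shows that `f` has conformable derivative `L` of order `α` at `t > a` iff `f` is differentiable
at `t` with `f' t = (t - a) ^ (α - 1) * L`. Hence the order-`β` derivative is
`(t - a) ^ (α - β) * L`. At `t = a` the modified derivative of any order `β < 1` is `0`, and so is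
`0 ^ (α - β)` for `β < α`. -/

theorem map_mul_right_nhdsNE_zero {G₀ : Type*} [GroupWithZero G₀] [TopologicalSpace G₀]
    [ContinuousMul G₀] {c : G₀} (hc : c ≠ 0) :
    map (· * c) (𝓝[≠] 0) = 𝓝[≠] 0 := by
  have h := (Homeomorph.mulRight₀ c hc).isEmbedding.map_nhdsWithin_eq {0}ᶜ 0
  rw [image_compl_eq (Homeomorph.mulRight₀ c hc).bijective, image_singleton] at h
  simpa only [Homeomorph.coe_mulRight₀, zero_mul] using h

theorem tendsto_slope_mul_iff_hasDerivAt {f : ℝ → ℝ} {x c L : ℝ} (hc : c ≠ 0) :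
    Tendsto (fun θ => (f (x + θ * c) - f x) / θ) (𝓝[≠] 0) (𝓝 L) ↔ HasDerivAt f (L / c) x := by
  rw [hasDerivAt_iff_tendsto_slope_zero, ← tendsto_const_smul_iff₀ (inv_ne_zero hc),
    smul_eq_mul, inv_mul_eq_div]
  conv_rhs => rw [← map_mul_right_nhdsNE_zero hc, tendsto_map'_iff]
  refine tendsto_congr fun θ => ?_
  simp only [Function.comp_apply, smul_eq_mul, mul_inv_rev]
  ring

theorem hasConfDerivAt_iff_hasDerivAt {a α t L : ℝ} {f : ℝ → ℝ} (ht : a < t) :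
    HasConfDerivAt a α f t L ↔ HasDerivAt f ((t - a) ^ (α - 1) * L) t := by
  have hpos : 0 < t - a := sub_pos.mpr ht
  rw [HasConfDerivAt, tendsto_slope_mul_iff_hasDerivAt (Real.rpow_pos_of_pos hpos _).ne',
    div_eq_inv_mul, ← Real.rpow_neg hpos.le, neg_sub]

theorem HasConfDerivAt.change_order {a α t L : ℝ} {f : ℝ → ℝ} (ht : a < t)
    (h : HasConfDerivAt a α f t L) (β : ℝ) :
    HasConfDerivAt a β f t ((t - a) ^ (α - β) * L) := by
  rw [hasConfDerivAt_iff_hasDerivAt ht] at h ⊢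
  rwa [← mul_assoc, ← Real.rpow_add (sub_pos.mpr ht), sub_add_sub_cancel']

theorem mhasConfDerivAt_self_iff {a α L : ℝ} {f : ℝ → ℝ} :
    MHasConfDerivAt a α f a L ↔
      ∃ d, HasDerivWithinAt f d (Ici a) a ∧ L = if α = 1 then d else 0 := by
  rw [MHasConfDerivAt, if_pos rfl]

theorem mhasConfDerivAt_iff_of_ne {a α t L : ℝ} {f : ℝ → ℝ} (ht : t ≠ a) :
    MHasConfDerivAt a α f t L ↔ HasConfDerivAt a α f t L := by
  rw [MHasConfDerivAt, if_neg ht]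

theorem mconf_deriv_order_change (a α t₀ L : ℝ) (f : ℝ → ℝ)
    (hα : α ∈ Set.Ioo (0:ℝ) 1) (ht₀ : t₀ ∈ Set.Ici a)
    (hf : MHasConfDerivAt a α f t₀ L) :
    ∀ β ∈ Set.Ioc (0:ℝ) 1, ∃ M : ℝ, MHasConfDerivAt a β f t₀ M ∧
      (a < t₀ → L = (t₀ - a) ^ (β - α) * M) ∧
      (t₀ = a → β < α → M = (t₀ - a) ^ (α - β) * L) := by
  intro β _
  rcases (mem_Ici.mp ht₀).eq_or_lt with rfl | hlt
  · obtain ⟨d, hd, -⟩ := mhasConfDerivAt_self_iff.mp hf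
    refine ⟨if β = 1 then d else 0, mhasConfDerivAt_self_iff.mpr ⟨d, hd, rfl⟩,
      fun h => (lt_irrefl a h).elim, fun _ hβα => ?_⟩
    rw [if_neg (hβα.trans hα.2).ne, sub_self, Real.zero_rpow (sub_ne_zero.mpr hβα.ne'), zero_mul]
  · have hne := hlt.ne'
    rw [mhasConfDerivAt_iff_of_ne hne] at hf
    refine ⟨(t₀ - a) ^ (α - β) * L, (mhasConfDerivAt_iff_of_ne hne).mpr (hf.change_order hlt β),
      fun _ => ?_, fun h => (hne h).elim⟩
    rw [← mul_assoc, ← Real.rpow_add (sub_pos.mpr hlt), sub_add_sub_cancel, sub_self,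
      Real.rpow_zero, one_mul]
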